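/- arXiv:1508.07451 — 5 statements merged into one kernel-verified Lean document; each statement's English description precedes it below -/
import Mathlib

section
/- Let (G, a, b) be an atomic chiral rotation pair. Then either Subgroup.zpowers a is core-free in G or Subgroup.zpowers b is core-free in G (i.e., at least one of these cyclic subgroups has trivial normal core). -/
/-!
Suppose both cores `N ≤ ⟨a⟩` and `M ≤ ⟨b⟩` are nontrivial. If `a ∈ N`, then `⟨a⟩` is normal and
`(ab)² = 1` puts `b²` in `⟨a⟩ ∩ ⟨b⟩ = 1`, so conjugation by `b` inverts both generators; hence
`a ∉ N`, and likewise `b ∉ M`. Then `G/N` is a tight rotation pair of type `(p', q)` with `p' < p`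
covered by `G`, so atomicity makes it orientably regular, and the same holds for `G/M`. As
`N ∩ M ≤ ⟨a⟩ ∩ ⟨b⟩ = 1`, `G` embeds in `G/N × G/M`; the product of the two inverting automorphisms
sends the generators of the image to their inverses, so it preserves the image and restricts to an
automorphism of `G` inverting `a` and `b`, contradicting chirality.
-/

/-- A rotation pair of type `(p, q)`: the group is generated by `a` and `b`,
`a` has order `p`, `b` has order `q`, `p, q ≥ 2`, `(a*b)^2 = 1`, and the cyclic
subgroups generated by `a` and `b` intersect trivially. -/
def IsRotPair {G : Type*} [Group G] (a b : G) (p q : ℕ) : Prop :=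
  Subgroup.closure ({a, b} : Set G) = ⊤ ∧ orderOf a = p ∧ orderOf b = q ∧
    2 ≤ p ∧ 2 ≤ q ∧ (a * b) ^ 2 = 1 ∧
    Subgroup.zpowers a ⊓ Subgroup.zpowers b = ⊥

/-- Tightness: every element is `a ^ i * b ^ j` for some integers `i, j`. -/
def IsTight {G : Type*} [Group G] (a b : G) : Prop :=
  ∀ g : G, ∃ i j : ℤ, g = a ^ i * b ^ j

/-- Orientably regular: some group automorphism inverts both generators. -/
def IsOrientablyRegular {G : Type*} [Group G] (a b : G) : Prop :=
  ∃ φ : G ≃* G, φ a = a⁻¹ ∧ φ b = b⁻¹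

/-- Chiral: no group automorphism inverts both generators. -/
def IsChiral {G : Type*} [Group G] (a b : G) : Prop :=
  ¬ IsOrientablyRegular a b

/-- `(G, a, b)` covers `(H, a', b')` if a homomorphism sends `a ↦ a'`, `b ↦ b'`. -/
def Covers {G H : Type*} [Group G] [Group H] (a b : G) (a' b' : H) : Prop :=
  ∃ f : G →* H, f a = a' ∧ f b = b'

/-- An atomic chiral rotation pair of type `(p, q)`: a tight chiral rotation pair
covering no tight chiral rotation pair of type `(p', q)` with `p' < p` nor one of
type `(p, q')` with `q' < q`. -/
def IsAtomicPair {G : Type*} [Group G] (a b : G) (p q : ℕ) : Prop :=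
  IsRotPair a b p q ∧ IsTight a b ∧ IsChiral a b ∧
  (∀ (H : Type) (instH : Group H) (_ : Finite H) (a' b' : H) (p' : ℕ), p' < p →
      @IsRotPair H instH a' b' p' q → @IsTight H instH a' b' → @IsChiral H instH a' b' →
      ¬ @Covers G H _ instH a b a' b') ∧
  (∀ (H : Type) (instH : Group H) (_ : Finite H) (a' b' : H) (q' : ℕ), q' < q →
      @IsRotPair H instH a' b' p q' → @IsTight H instH a' b' → @IsChiral H instH a' b' →
      ¬ @Covers G H _ instH a b a' b')

open Subgroup

section

variable {G H K : Type*} [Group G] [Group H] [Group K] {a b : G} {p q : ℕ}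

lemma IsRotPair.swap (h : IsRotPair a b p q) : IsRotPair b a q p := by
  obtain ⟨hcl, hpa, hpb, hp2, hq2, hab, hinf⟩ := h
  refine ⟨by rwa [Set.pair_comm], hpb, hpa, hq2, hp2, ?_, by rwa [inf_comm]⟩
  have : (b * a) ^ 2 = a⁻¹ * (a * b) ^ 2 * a := by simp only [pow_two]; group
  rw [this, hab]
  group

lemma IsOrientablyRegular.symm (h : IsOrientablyRegular a b) : IsOrientablyRegular b a :=
  let ⟨φ, ha, hb⟩ := h
  ⟨φ, hb, ha⟩

lemma IsTight.map (h : IsTight a b) {f : G →* H} (hf : Function.Surjective f) :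
    IsTight (f a) (f b) := by
  intro y
  obtain ⟨x, rfl⟩ := hf y
  obtain ⟨i, j, rfl⟩ := h x
  exact ⟨i, j, by rw [map_mul, map_zpow, map_zpow]⟩

lemma isOrientablyRegular_of_monoidHom (hcl : closure ({a, b} : Set G) = ⊤) (g : G →* G)
    (ha : g a = a⁻¹) (hb : g b = b⁻¹) : IsOrientablyRegular a b := by
  have hgg : g.comp g = MonoidHom.id G := by
    refine MonoidHom.eq_of_eqOn_dense hcl ?_
    rintro x (rfl | rfl) <;> simp [ha, hb]
  exact ⟨g.toMulEquiv g hgg hgg, ha, hb⟩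

lemma isOrientablyRegular_of_injective (hcl : closure ({a, b} : Set G) = ⊤) {f : G →* K}
    (hf : Function.Injective f) (Φ : K →* K) (ha : Φ (f a) = f a⁻¹) (hb : Φ (f b) = f b⁻¹) :
    IsOrientablyRegular a b := by
  have hrange : ∀ x, Φ (f x) ∈ f.range := by
    suffices closure {a, b} ≤ f.range.comap (Φ.comp f) from fun x => this (hcl ▸ mem_top x)
    rw [closure_le]
    exact Set.pair_subset ⟨a⁻¹, ha.symm⟩ ⟨b⁻¹, hb.symm⟩
  let g : G →* G :=
    (MonoidHom.ofInjective hf).symm.toMonoidHom.comp ((Φ.comp f).codRestrict f.range hrange)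
  have hg : ∀ x, f (g x) = Φ (f x) := fun x => MonoidHom.apply_ofInjective_symm hf _
  exact isOrientablyRegular_of_monoidHom hcl g (hf (by rw [hg, ha])) (hf (by rw [hg, hb]))

lemma isOrientablyRegular_of_ker_inf_ker_eq_bot (hcl : closure ({a, b} : Set G) = ⊤)
    (f₁ : G →* H) (f₂ : G →* K) (hker : f₁.ker ⊓ f₂.ker = ⊥)
    (h₁ : IsOrientablyRegular (f₁ a) (f₁ b)) (h₂ : IsOrientablyRegular (f₂ a) (f₂ b)) :
    IsOrientablyRegular a b := by
  obtain ⟨φ₁, ha₁, hb₁⟩ := h₁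
  obtain ⟨φ₂, ha₂, hb₂⟩ := h₂
  have hf : Function.Injective (f₁.prod f₂) := by
    rw [← MonoidHom.ker_eq_bot_iff, MonoidHom.ker_prod, hker]
  refine isOrientablyRegular_of_injective hcl hf ((φ₁ : H →* H).prodMap (φ₂ : K →* K)) ?_ ?_
  · simp [ha₁, ha₂]
  · simp [hb₁, hb₂]

lemma isOrientablyRegular_of_conj_mem_zpowers (hab : (a * b) ^ 2 = 1)
    (hinf : zpowers a ⊓ zpowers b = ⊥) (hconj : b * a * b⁻¹ ∈ zpowers a) :
    IsOrientablyRegular a b := by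
  have hbab : b * a * b = a⁻¹ := eq_inv_of_mul_eq_one_right (by rw [← hab, pow_two]; group)
  have hsq : a * (b * a * b⁻¹) = b⁻¹ * b⁻¹ := by
    rw [show a * (b * a * b⁻¹) = a * b * (a * b) * b⁻¹ * b⁻¹ by group, ← pow_two, hab, one_mul]
  have hb : b⁻¹ * b⁻¹ = 1 := by
    rw [← mem_bot, ← hinf]
    have hb₁ : b⁻¹ ∈ zpowers b := inv_mem (mem_zpowers b)
    exact mem_inf.2 ⟨hsq ▸ mul_mem (mem_zpowers a) hconj, mul_mem hb₁ hb₁⟩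
  have hb' : b⁻¹ = b := by rw [mul_eq_one_iff_eq_inv.1 hb, inv_inv]
  exact ⟨MulAut.conj b, by rw [MulAut.conj_apply, hb', hbab],
    by rw [MulAut.conj_apply, mul_inv_cancel_right, hb']⟩

lemma mem_zpowers_map_iff {f : G →* H} (hker : f.ker ≤ zpowers a) {x : G} :
    f x ∈ zpowers (f a) ↔ x ∈ zpowers a := by
  rw [← MonoidHom.map_zpowers, ← mem_comap, comap_map_eq, sup_of_le_left hker]

lemma orderOf_map_lt_of_ker_le_zpowers {f : G →* H} (ha : IsOfFinOrder a)
    (hker : f.ker ≤ zpowers a) (hne : f.ker ≠ ⊥) : orderOf (f a) < orderOf a := by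
  obtain ⟨⟨x, hx⟩, hx1⟩ := ne_bot_iff_exists_ne_one.1 hne
  obtain ⟨k, rfl⟩ := mem_zpowers_iff.1 (hker hx)
  refine (Nat.le_of_dvd ha.orderOf_pos (orderOf_map_dvd f a)).lt_of_ne fun heq => hx1 ?_
  rw [MonoidHom.mem_ker, map_zpow, ← orderOf_dvd_iff_zpow_eq_one, heq,
    orderOf_dvd_iff_zpow_eq_one] at hx
  exact Subtype.ext hx

lemma IsRotPair.map_of_ker_le_zpowers_left (h : IsRotPair a b p q) {f : G →* H}
    (hf : Function.Surjective f) (hker : f.ker ≤ zpowers a) (ha : a ∉ f.ker) :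
    IsRotPair (f a) (f b) (orderOf (f a)) q := by
  obtain ⟨hcl, hpa, rfl, hp2, hq2, hab, hinf⟩ := h
  have hb : ∀ y ∈ zpowers b, f y ∈ zpowers (f a) → y = 1 := fun y hy hfy => by
    rw [← mem_bot, ← hinf]
    exact ⟨(mem_zpowers_map_iff hker).1 hfy, hy⟩
  refine ⟨?_, rfl, ?_, ?_, hq2, ?_, ?_⟩
  · rw [← Set.image_pair, ← MonoidHom.map_closure, hcl, map_top_of_surjective f hf]
  · refine orderOf_eq_orderOf_iff.2 fun n =>
      ⟨fun hn => ?_, fun hn => by rw [← map_pow, hn, map_one]⟩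
    exact hb _ (pow_mem (mem_zpowers b) n) (by rw [map_pow, hn]; exact one_mem _)
  · have hpos := Nat.pos_of_dvd_of_pos (hpa ▸ orderOf_map_dvd f a) (by omega)
    have hne := mt orderOf_eq_one_iff.1 ha
    omega
  · rw [← map_mul, ← map_pow, hab, map_one]
  · rw [eq_bot_iff]
    rintro x ⟨hxa, hxb⟩
    obtain ⟨j, rfl⟩ := mem_zpowers_iff.1 hxb
    rw [← map_zpow] at hxa ⊢
    rw [hb _ (zpow_mem (mem_zpowers b) j) hxa, map_one]
    exact one_mem _

lemma IsRotPair.map_of_ker_le_zpowers_right (h : IsRotPair a b p q) {f : G →* H}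
    (hf : Function.Surjective f) (hker : f.ker ≤ zpowers b) (hb : b ∉ f.ker) :
    IsRotPair (f a) (f b) p (orderOf (f b)) :=
  (h.swap.map_of_ker_le_zpowers_left hf hker hb).swap

namespace IsAtomicPair

variable {H : Type} [Group H] [Finite H] {f : G →* H}

lemma isOrientablyRegular_map_left (h : IsAtomicPair a b p q) (hf : Function.Surjective f)
    (hker : f.ker ≤ zpowers a) (hne : f.ker ≠ ⊥) (ha : a ∉ f.ker) :
    IsOrientablyRegular (f a) (f b) := by
  obtain ⟨hrot, htight, -, hatom, -⟩ := h
  have hp : orderOf a = p := hrot.2.1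
  have hfin : IsOfFinOrder a := orderOf_pos_iff.1 (hp ▸ zero_lt_two.trans_le hrot.2.2.2.1)
  by_contra hchiral
  exact hatom H _ inferInstance _ _ _ (hp ▸ orderOf_map_lt_of_ker_le_zpowers hfin hker hne)
    (hrot.map_of_ker_le_zpowers_left hf hker ha) (htight.map hf) hchiral ⟨f, rfl, rfl⟩

lemma isOrientablyRegular_map_right (h : IsAtomicPair a b p q) (hf : Function.Surjective f)
    (hker : f.ker ≤ zpowers b) (hne : f.ker ≠ ⊥) (hb : b ∉ f.ker) :
    IsOrientablyRegular (f a) (f b) := by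
  obtain ⟨hrot, htight, -, -, hatom⟩ := h
  have hq : orderOf b = q := hrot.2.2.1
  have hfin : IsOfFinOrder b := orderOf_pos_iff.1 (hq ▸ zero_lt_two.trans_le hrot.2.2.2.2.1)
  by_contra hchiral
  exact hatom H _ inferInstance _ _ _ (hq ▸ orderOf_map_lt_of_ker_le_zpowers hfin hker hne)
    (hrot.map_of_ker_le_zpowers_right hf hker hb) (htight.map hf) hchiral ⟨f, rfl, rfl⟩

end IsAtomicPair

section Shrink

variable (N : Subgroup G) [N.Normal] [Small.{0} (G ⧸ N)]

-- `IsAtomicPair` only quantifies over groups in `Type`.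
noncomputable def shrinkMk : G →* Shrink.{0} (G ⧸ N) :=
  (Shrink.mulEquiv.symm : G ⧸ N ≃* Shrink.{0} (G ⧸ N)).toMonoidHom.comp (QuotientGroup.mk' N)

lemma shrinkMk_surjective : Function.Surjective (shrinkMk N) :=
  Shrink.mulEquiv.symm.surjective.comp (QuotientGroup.mk'_surjective N)

@[simp]
lemma ker_shrinkMk : (shrinkMk N).ker = N := by
  simp [shrinkMk]

end Shrink

end

/-- In an atomic chiral rotation pair, `zpowers a` or `zpowers b` is core-free. -/
theorem atomic_core_free {G : Type*} [Group G] [Finite G] (a b : G) (p q : ℕ)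
    (h : IsAtomicPair a b p q) :
    (Subgroup.zpowers a).normalCore = ⊥ ∨ (Subgroup.zpowers b).normalCore = ⊥ := by
  obtain ⟨hcl, -, -, -, -, hab, hinf⟩ := h.1
  obtain ⟨-, -, -, -, -, hba, hinf'⟩ := h.1.swap
  have hchiral : IsChiral a b := h.2.2.1
  by_contra! hcore
  set N := (zpowers a).normalCore
  set M := (zpowers b).normalCore
  obtain ⟨hN, hM⟩ := hcore
  have hNa : N ≤ zpowers a := normalCore_le _
  have hMb : M ≤ zpowers b := normalCore_le _
  have haN : a ∉ N := fun ha => hchiral <| isOrientablyRegular_of_conj_mem_zpowers hab hinf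
    (hNa ((normalCore_normal _).conj_mem a ha b))
  have hbM : b ∉ M := fun hb => hchiral <| IsOrientablyRegular.symm <|
    isOrientablyRegular_of_conj_mem_zpowers hba hinf' (hMb ((normalCore_normal _).conj_mem b hb a))
  refine hchiral (isOrientablyRegular_of_ker_inf_ker_eq_bot hcl (shrinkMk N) (shrinkMk M) ?_ ?_ ?_)
  · rw [ker_shrinkMk, ker_shrinkMk, eq_bot_iff, ← hinf]
    exact inf_le_inf hNa hMb
  · refine h.isOrientablyRegular_map_left (shrinkMk_surjective N) ?_ ?_ ?_ <;>
      rwa [ker_shrinkMk]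
  · refine h.isOrientablyRegular_map_right (shrinkMk_surjective M) ?_ ?_ ?_ <;>
      rwa [ker_shrinkMk]
end

section
/- Let (G, a, b) be a tight chiral rotation pair of type (p, q) with q ≥ p. Then there exists an integer q' dividing q with 2 ≤ q' < p such that the subgroup Subgroup.zpowers (b^q') is normal in G. -/
/-!
Let `B = ⟨b⟩` and `C = B ∩ aBa⁻¹`. The involution `t = ab` conjugates `B` onto `aBa⁻¹` and back,
so it normalizes `C`; `b` centralizes `C ≤ B`; hence `C` is normal in `⟨a, b⟩ = G`. Being a
subgroup of the cyclic group `B`, `C = ⟨b ^ q'⟩` with `q' ∣ q` and `[B : C] = q'`.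

The `B`-orbit of the coset `aB` in `G/B` has stabilizer `C`, so it has `q'` elements, and it misses
the coset `B` since `a ∉ B`; tightness makes `G/B` have exactly `p` elements, so `q' < p`. Finally
`q' = 1` would put `a⁻¹ba` in `B`; with `(ab)² = 1` and `⟨a⟩ ∩ ⟨b⟩ = 1` this forces `a² = 1` and
`a⁻¹ba = b⁻¹`, so conjugation by `a` inverts both generators, contradicting chirality.
-/

open Subgroup
open scoped Pointwise

namespace Subgroup

variable {G : Type*} [Group G]

theorem mem_conjAct_smul_iff {H : Subgroup G} {g x : G} :
    x ∈ ConjAct.toConjAct g • H ↔ g⁻¹ * x * g ∈ H := by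
  rw [mem_pointwise_smul_iff_inv_smul_mem, ← ConjAct.toConjAct_inv, ConjAct.toConjAct_smul,
    inv_inv]

theorem zpowers_pow_gcd_orderOf (g : G) (n : ℕ) :
    zpowers (g ^ n.gcd (orderOf g)) = zpowers (g ^ n) := by
  have hgcd : g ^ n.gcd (orderOf g) = (g ^ n) ^ n.gcdA (orderOf g) := by
    rw [← zpow_natCast g (n.gcd _), Nat.gcd_eq_gcd_ab, zpow_add, zpow_mul, zpow_mul,
      zpow_natCast, zpow_natCast, pow_orderOf_eq_one, one_zpow, mul_one]
  have hn : g ^ n = (g ^ n.gcd (orderOf g)) ^ (n / n.gcd (orderOf g)) := by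
    rw [← pow_mul, Nat.mul_div_cancel' (Nat.gcd_dvd_left _ _)]
  apply le_antisymm
  · rw [zpowers_le, hgcd]
    exact zpow_mem (mem_zpowers _) _
  · rw [zpowers_le, hn]
    exact pow_mem (mem_zpowers _) _

theorem relIndex_zpowers_pow_zpowers {g : G} {d : ℕ} (hg : 0 < orderOf g) (hd : d ∣ orderOf g) :
    (zpowers (g ^ d)).relIndex (zpowers g) = d := by
  have hd0 : 0 < d := Nat.pos_of_dvd_of_pos hd hg
  have hmul := relIndex_mul_relIndex ⊥ _ _ bot_le (zpowers_le.mpr (pow_mem (mem_zpowers g) d))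
  rw [relIndex_bot_left, relIndex_bot_left, Nat.card_zpowers, Nat.card_zpowers,
    orderOf_pow_of_dvd hd0.ne' hd] at hmul
  refine Nat.eq_of_mul_eq_mul_left (Nat.div_pos (Nat.le_of_dvd hg hd) hd0) ?_
  rw [hmul, Nat.div_mul_cancel hd]

theorem relIndex_conjAct_smul_add_one_le_index {H : Subgroup G} [H.FiniteIndex] {g : G}
    (hg : g ∉ H) : (ConjAct.toConjAct g • H).relIndex H + 1 ≤ H.index := by
  have hstab : MulAction.stabilizer H (g : G ⧸ H) = (ConjAct.toConjAct g • H).subgroupOf H := by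
    ext h
    rw [MulAction.mem_stabilizer_iff, mem_subgroupOf, mem_conjAct_smul_iff]
    change ((h * g : G) : G ⧸ H) = g ↔ _
    rw [QuotientGroup.eq, mul_inv_rev, ← inv_mem_iff]
    simp only [mul_inv_rev, inv_inv, mul_assoc]
  have hfix : ((1 : G) : G ⧸ H) ∉ MulAction.orbit H (g : G ⧸ H) := by
    rintro ⟨h, hh⟩
    change ((h * g : G) : G ⧸ H) = (1 : G) at hh
    rw [QuotientGroup.eq, mul_one, inv_mem_iff] at hh
    exact hg ((mul_mem_cancel_left h.2).mp hh)
  rw [relIndex, ← hstab, MulAction.index_stabilizer, index_eq_card, ← Set.ncard_univ]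
  exact Set.ncard_lt_ncard (Set.ssubset_univ_iff.mpr fun h => hfix (h ▸ Set.mem_univ _))

theorem normal_inf_conjAct_smul {H : Subgroup G} [IsMulCommutative H] {a h : G} (hh : h ∈ H)
    (hinv : (a * h) ^ 2 = 1) (hgen : closure {a, h} = ⊤) :
    (H ⊓ ConjAct.toConjAct a • H).Normal := by
  set C := H ⊓ ConjAct.toConjAct a • H
  have hconj : ConjAct.toConjAct (a * h) • H = ConjAct.toConjAct a • H := by
    rw [map_mul, mul_smul, conjAct_pointwise_smul_eq_self (le_normalizer hh)]
  have hah_mem : a * h ∈ normalizer (C : Set G) := by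
    rw [← conjAct_pointwise_smul_iff, smul_inf, ← hconj, ← mul_smul, ← map_mul, ← sq, hinv,
      map_one, one_smul, inf_comm, hconj]
  have hh_mem : h ∈ normalizer (C : Set G) :=
    centralizer_le_normalizer _
      (centralizer_le (inf_le_left : C ≤ H) (le_centralizer (H := H) hh))
  have ha_mem : a ∈ normalizer (C : Set G) := by
    simpa using mul_mem hah_mem (inv_mem hh_mem)
  rw [← normalizer_eq_top_iff, eq_top_iff, ← hgen, closure_le]
  exact Set.insert_subset_iff.mpr ⟨ha_mem, Set.singleton_subset_iff.mpr hh_mem⟩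

end Subgroup

theorem isOrientablyRegular_of_inv_mul_mul_mem_zpowers {G : Type*} [Group G] {a b : G}
    (hab : (a * b) ^ 2 = 1) (hdisj : zpowers a ⊓ zpowers b = ⊥)
    (hb : a⁻¹ * b * a ∈ zpowers b) : IsOrientablyRegular a b := by
  obtain ⟨m, hm⟩ := mem_zpowers_iff.mp hb
  have hsq : a ^ 2 = (b ^ (m + 1))⁻¹ := by
    rw [eq_inv_iff_mul_eq_one, zpow_add_one, hm, ← hab, pow_two (a * b)]
    group
  have ha2 : a ^ 2 = 1 := by
    have : a ^ 2 ∈ zpowers a ⊓ zpowers b := mem_inf.mpr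
      ⟨pow_mem (mem_zpowers a) 2, by rw [hsq]; exact inv_mem (zpow_mem_zpowers b _)⟩
    rwa [hdisj, mem_bot] at this
  have hainv : a⁻¹ = a := inv_eq_of_mul_eq_one_right (by rwa [← sq])
  have hbm : b ^ m * b = 1 := by rw [← zpow_add_one, ← inv_eq_one, ← hsq, ha2]
  refine ⟨MulAut.conj a, ?_, ?_⟩
  · rw [MulAut.conj_apply, mul_inv_cancel_right, hainv]
  · calc MulAut.conj a b = a⁻¹ * b * a := by rw [MulAut.conj_apply, hainv]
      _ = b⁻¹ := by rw [← hm, eq_inv_of_mul_eq_one_left hbm]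

theorem index_zpowers_eq_orderOf_of_isTight {G : Type*} [Group G] {a b : G}
    (htight : IsTight a b) (hdisj : zpowers a ⊓ zpowers b = ⊥) :
    (zpowers b).index = orderOf a := by
  have hcompl : IsComplement' (zpowers a) (zpowers b) := by
    refine isComplement'_of_disjoint_and_mul_eq_univ (disjoint_iff.mpr hdisj)
      (Set.eq_univ_of_forall fun g => ?_)
    obtain ⟨i, j, rfl⟩ := htight g
    exact Set.mul_mem_mul (zpow_mem_zpowers a i) (zpow_mem_zpowers b j)
  rw [hcompl.index_eq_card, Nat.card_zpowers]

theorem tight_chiral_normal_subgroup_general {G : Type*} [Group G] (a b : G)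
    (p q : ℕ) (hpair : IsRotPair a b p q) (htight : IsTight a b)
    (hchiral : IsChiral a b) :
    ∃ q' : ℕ, q' ∣ q ∧ 2 ≤ q' ∧ q' < p ∧ (Subgroup.zpowers (b ^ q')).Normal := by
  obtain ⟨hgen, rfl, rfl, hp, hq, hab, hdisj⟩ := hpair
  set C := zpowers b ⊓ ConjAct.toConjAct a • zpowers b with hCdef
  obtain ⟨n, hn⟩ := (le_zpowers_iff b C).mp inf_le_left
  set q' := n.gcd (orderOf b)
  have hC : C = zpowers (b ^ q') := hn.trans (zpowers_pow_gcd_orderOf b n).symm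
  have hq' : q' ∣ orderOf b := Nat.gcd_dvd_right _ _
  have hq'pos : 0 < q' := Nat.gcd_pos_of_pos_right _ (by omega)
  have ha : a ∉ zpowers b := fun ha => by
    have : a ∈ zpowers a ⊓ zpowers b := ⟨mem_zpowers a, ha⟩
    rw [hdisj, mem_bot] at this
    rw [this, orderOf_one] at hp
    omega
  have hindex := index_zpowers_eq_orderOf_of_isTight htight hdisj
  have : (zpowers b).FiniteIndex := ⟨by omega⟩
  have hlt := relIndex_conjAct_smul_add_one_le_index ha
  rw [← inf_relIndex_left, ← hCdef, hC, relIndex_zpowers_pow_zpowers (by omega) hq', hindex] at hlt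
  have hne : q' ≠ 1 := by
    intro h1
    have hb : b ∈ C := by rw [hC, h1, pow_one]; exact mem_zpowers b
    exact hchiral (isOrientablyRegular_of_inv_mul_mul_mem_zpowers hab hdisj
      (mem_conjAct_smul_iff.mp (mem_inf.mp hb).2))
  exact ⟨q', hq', by omega, by omega, hC ▸ normal_inf_conjAct_smul (mem_zpowers b) hab hgen⟩

/-- A tight chiral rotation pair of type `(p, q)` with `q ≥ p` has a normal subgroup
`zpowers (b ^ q')` for some divisor `q'` of `q` with `2 ≤ q' < p`. -/
theorem tight_chiral_normal_subgroup {G : Type*} [Group G] [Finite G] (a b : G)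
    (p q : ℕ) (hpair : IsRotPair a b p q) (htight : IsTight a b)
    (hchiral : IsChiral a b) (hpq : p ≤ q) :
    ∃ q' : ℕ, q' ∣ q ∧ 2 ≤ q' ∧ q' < p ∧ (Subgroup.zpowers (b ^ q')).Normal :=
  tight_chiral_normal_subgroup_general a b p q hpair htight hchiral
end

section
/- Let (G, a, b) be a tight chiral rotation pair of type (p, q), let q' be a divisor of q, and suppose the subgroup Subgroup.zpowers (b^q') is normal in G. Then there is an integer c with c² ≡ 1 (mod q/q') such that a * b^q' = b^(c·q') * a. Furthermore, a² commutes with b^q', and if p is odd then b^q' lies in the center of G. -/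
section

variable {G : Type*} [Group G] {a b x : G}

theorem commute_sq_of_mul_sq_eq_one (hab : (a * b) ^ 2 = 1) (hbx : Commute b x)
    (hbax : Commute b (a * x * a⁻¹)) : Commute (a ^ 2) x := by
  have hinv : a⁻¹ = b * a * b :=
    inv_eq_of_mul_eq_one_right (by rw [← hab, sq]; group)
  have hconj : a⁻¹ * x * a = a * x * a⁻¹ :=
    calc a⁻¹ * x * a = b * a * b * x * (b * a * b)⁻¹ := by rw [← hinv, inv_inv]
      _ = b * (a * (b * x * b⁻¹) * a⁻¹) * b⁻¹ := by group
      _ = a * x * a⁻¹ := by rw [hbx.eq, mul_inv_cancel_right, hbax.eq, mul_inv_cancel_right]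
  calc a ^ 2 * x = a * (a * x * a⁻¹) * a := by rw [sq]; group
    _ = a * (a⁻¹ * x * a) * a := by rw [hconj]
    _ = x * a ^ 2 := by rw [sq]; group

theorem sq_modEq_one_of_conj_eq_zpow {c : ℤ} (hc : a * x * a⁻¹ = x ^ c)
    (ha2 : Commute (a ^ 2) x) : c ^ 2 ≡ 1 [ZMOD orderOf x] := by
  rw [← zpow_eq_zpow_iff_modEq, zpow_one]
  calc x ^ (c ^ 2) = (a * x * a⁻¹) ^ c := by rw [hc, sq, zpow_mul]
    _ = a * (a * x * a⁻¹) * a⁻¹ := by rw [conj_zpow, hc]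
    _ = a ^ 2 * x * (a ^ 2)⁻¹ := by rw [sq]; group
    _ = x := by rw [ha2.eq, mul_inv_cancel_right]

theorem commute_of_commute_sq_of_odd_orderOf (ha : Odd (orderOf a))
    (ha2 : Commute (a ^ 2) x) : Commute a x := by
  obtain ⟨k, hk⟩ := ha
  have hpow : (a ^ 2) ^ (k + 1) = a := by
    rw [← pow_mul, show 2 * (k + 1) = orderOf a + 1 by omega, pow_succ, pow_orderOf_eq_one,
      one_mul]
  exact hpow ▸ ha2.pow_left (k + 1)

theorem mem_center_of_commute_generators (hgen : Subgroup.closure ({a, b} : Set G) = ⊤)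
    (hax : Commute a x) (hbx : Commute b x) : x ∈ Subgroup.center G := by
  rw [Subgroup.center_eq_iInf hgen]
  simp [Subgroup.mem_centralizer_singleton_iff, hax.eq, hbx.eq]

end

theorem tight_chiral_central_element_general {G : Type*} [Group G] (a b : G)
    (p q q' : ℕ) (hpair : IsRotPair a b p q) (hq' : q' ∣ q)
    (hnormal : (Subgroup.zpowers (b ^ q')).Normal) :
    (∃ c : ℤ, c ^ 2 ≡ 1 [ZMOD ((q / q' : ℕ) : ℤ)] ∧
        a * b ^ q' = b ^ (c * (q' : ℤ)) * a) ∧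
    Commute (a ^ 2) (b ^ q') ∧
    (Odd p → b ^ q' ∈ Subgroup.center G) := by
  obtain ⟨hgen, rfl, rfl, -, hq2, hab, -⟩ := hpair
  have hq'0 : q' ≠ 0 := by rintro rfl; rw [zero_dvd_iff] at hq'; omega
  have hbx : Commute b (b ^ q') := (Commute.refl b).pow_right q'
  obtain ⟨c, hc⟩ := Subgroup.mem_zpowers_iff.mp
    (hnormal.conj_mem _ (Subgroup.mem_zpowers _) a)
  have ha2 : Commute (a ^ 2) (b ^ q') :=
    commute_sq_of_mul_sq_eq_one hab hbx (hc ▸ hbx.zpow_right c)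
  refine ⟨⟨c, ?_, ?_⟩, ha2, fun hodd => ?_⟩
  · rw [← orderOf_pow_of_dvd hq'0 hq']
    exact sq_modEq_one_of_conj_eq_zpow hc.symm ha2
  · rw [mul_comm, zpow_mul, zpow_natCast, hc]
    group
  · exact mem_center_of_commute_generators hgen
      (commute_of_commute_sq_of_odd_orderOf hodd ha2) hbx

/-- If `zpowers (b ^ q')` is normal in a tight chiral rotation pair, then
`a * b ^ q' = b ^ (c q') * a` with `c² ≡ 1 (mod q/q')`, `a²` commutes with `b ^ q'`,
and if `p` is odd then `b ^ q'` is central. -/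
theorem tight_chiral_central_element {G : Type*} [Group G] [Finite G] (a b : G)
    (p q q' : ℕ) (hpair : IsRotPair a b p q) (htight : IsTight a b)
    (hchiral : IsChiral a b) (hq' : q' ∣ q)
    (hnormal : (Subgroup.zpowers (b ^ q')).Normal) :
    (∃ c : ℤ, c ^ 2 ≡ 1 [ZMOD ((q / q' : ℕ) : ℤ)] ∧
        a * b ^ q' = b ^ (c * (q' : ℤ)) * a) ∧
    Commute (a ^ 2) (b ^ q') ∧
    (Odd p → b ^ q' ∈ Subgroup.center G) :=
  tight_chiral_central_element_general a b p q q' hpair hq' hnormal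
end

section
/- Let p, q ≥ 1 be natural numbers and i, j₁, j₂ integers. Let G be a group generated by two elements a and b satisfying a^p = 1, b^q = 1, (a*b)^2 = 1, b⁻¹ * a = a^i * b^(j₁), and b * a⁻¹ = a^(−i) * b^(j₂). Then every element of G can be written as a^s * b^t for some integers s, t (i.e., G is tight). -/
/-!
The relations make conjugation by `a` exchange `x = b ^ (j₁ - 1)` and `y = b ^ (j₂ + 1)` up to
inversion: `a⁻¹ x a = y⁻¹` and `a⁻¹ y a = x⁻¹`. Hence `x` can be moved to the right past any
`a ^ n` at the cost of a power of `b`, and the identities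
`b⁻¹ a ^ (n + 1) = a ^ i b (x a ^ n)` and `b a ^ (n + 1) = a⁻¹ (b⁻¹ a ^ n)` show by induction on
`n` that `b ^ (± 1) a ^ n ∈ ⟨a⟩⟨b⟩`. The pair `(a⁻¹, b⁻¹)` satisfies relations of the same shape,
which gives the negative powers of `a`. So `⟨a⟩⟨b⟩` is stable under left multiplication by
`a ^ (± 1)` and `b ^ (± 1)`, and since these generate `G` it is all of `G`.
-/

section

variable {G : Type*} [Group G]

def zpowersMulZpowers (a b : G) : Set G := {g | ∃ s t : ℤ, g = a ^ s * b ^ t}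

variable {a b g : G}

theorem zpowersMulZpowers.zpow_mul_mem (hg : g ∈ zpowersMulZpowers a b) (u : ℤ) :
    a ^ u * g ∈ zpowersMulZpowers a b := by
  obtain ⟨s, t, rfl⟩ := hg
  exact ⟨u + s, t, by rw [zpow_add, mul_assoc]⟩

theorem zpowersMulZpowers.mul_zpow_mem (hg : g ∈ zpowersMulZpowers a b) (v : ℤ) :
    g * b ^ v ∈ zpowersMulZpowers a b := by
  obtain ⟨s, t, rfl⟩ := hg
  exact ⟨s, t + v, by rw [zpow_add, mul_assoc]⟩

theorem zpowersMulZpowers_inv : zpowersMulZpowers a⁻¹ b⁻¹ = zpowersMulZpowers a b := by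
  ext g
  refine ⟨fun ⟨s, t, hg⟩ => ⟨-s, -t, ?_⟩, fun ⟨s, t, hg⟩ => ⟨-s, -t, ?_⟩⟩ <;> simp [hg]

theorem mem_zpowersMulZpowers_of_closure_eq_top (hgen : Subgroup.closure {a, b} = ⊤)
    (hb : ∀ s : ℤ, b * a ^ s ∈ zpowersMulZpowers a b)
    (hb' : ∀ s : ℤ, b⁻¹ * a ^ s ∈ zpowersMulZpowers a b) (g : G) :
    g ∈ zpowersMulZpowers a b := by
  have hg : g ∈ Subgroup.closure {a, b} := hgen ▸ Subgroup.mem_top g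
  induction hg using Subgroup.closure_induction_left with
  | one => exact ⟨0, 0, by simp⟩
  | mul_left x hx y _ hy =>
    obtain ⟨s, t, rfl⟩ := hy
    rcases hx with rfl | rfl
    · simpa [← mul_assoc] using zpowersMulZpowers.zpow_mul_mem (b := b) ⟨s, t, rfl⟩ 1
    · simpa [← mul_assoc] using zpowersMulZpowers.mul_zpow_mem (hb s) t
  | inv_mul_cancel x hx y _ hy =>
    obtain ⟨s, t, rfl⟩ := hy
    rcases hx with rfl | rfl
    · simpa [← mul_assoc] using zpowersMulZpowers.zpow_mul_mem (b := b) ⟨s, t, rfl⟩ (-1)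
    · simpa [← mul_assoc] using zpowersMulZpowers.mul_zpow_mem (hb' s) t

theorem inv_pow_mul_mul_pow_mem {H : Subgroup G} {x y : G} (hx : x ∈ H) (hy : y ∈ H)
    (hxy : a⁻¹ * x * a = y⁻¹) (hyx : a⁻¹ * y * a = x⁻¹) (n : ℕ) :
    (a ^ n)⁻¹ * x * a ^ n ∈ H ∧ (a ^ n)⁻¹ * y * a ^ n ∈ H := by
  induction n with
  | zero => simpa using ⟨hx, hy⟩
  | succ n ih =>
    have conj_succ (z : G) : (a ^ (n + 1))⁻¹ * z * a ^ (n + 1) =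
        (a ^ n)⁻¹ * (a⁻¹ * z * a) * a ^ n := by group
    rw [conj_succ, conj_succ, hxy, hyx]
    constructor
    · simpa [mul_assoc] using H.inv_mem ih.2
    · simpa [mul_assoc] using H.inv_mem ih.1

variable {i j₁ j₂ : ℤ}

theorem mul_eq_inv_mul_inv_of_mul_sq_eq_one (hab : (a * b) ^ 2 = 1) : b * a = a⁻¹ * b⁻¹ := by
  calc b * a = a⁻¹ * (a * b) ^ 2 * b⁻¹ := by rw [sq]; group
    _ = a⁻¹ * b⁻¹ := by rw [hab, mul_one]

theorem inv_mul_zpow_sub_one_mul (hab : (a * b) ^ 2 = 1) (h₁ : b⁻¹ * a = a ^ i * b ^ j₁)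
    (h₂ : b * a⁻¹ = a ^ (-i) * b ^ j₂) : a⁻¹ * b ^ (j₁ - 1) * a = (b ^ (j₂ + 1))⁻¹ := by
  have hba := mul_eq_inv_mul_inv_of_mul_sq_eq_one hab
  refine eq_inv_of_mul_eq_one_left ?_
  calc a⁻¹ * b ^ (j₁ - 1) * a * b ^ (j₂ + 1)
      = a⁻¹ * b⁻¹ * b⁻¹ * a ^ (-i) * (a ^ i * b ^ j₁) * (b * a) * b ^ (j₂ + 1) := by group
    _ = a⁻¹ * b⁻¹ * b⁻¹ * a ^ (-i) * (b⁻¹ * a) * (a⁻¹ * b⁻¹) * b ^ (j₂ + 1) := by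
      rw [← h₁, hba]
    _ = a⁻¹ * b⁻¹ * b⁻¹ * (a ^ (-i) * b ^ j₂) * b⁻¹ := by group
    _ = a⁻¹ * b⁻¹ * b⁻¹ * (b * a⁻¹) * b⁻¹ := by rw [← h₂]
    _ = a⁻¹ * b⁻¹ * (b * a) := by rw [hba]; group
    _ = 1 := by group

theorem inv_mul_zpow_add_one_mul (h₁ : b⁻¹ * a = a ^ i * b ^ j₁)
    (h₂ : b * a⁻¹ = a ^ (-i) * b ^ j₂) : a⁻¹ * b ^ (j₂ + 1) * a = (b ^ (j₁ - 1))⁻¹ := by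
  refine eq_inv_of_mul_eq_one_left ?_
  calc a⁻¹ * b ^ (j₂ + 1) * a * b ^ (j₁ - 1)
      = a⁻¹ * b * a ^ i * (a ^ (-i) * b ^ j₂) * a * b ^ (j₁ - 1) := by group
    _ = a⁻¹ * b * (a ^ i * b ^ j₁) := by rw [← h₂]; group
    _ = 1 := by rw [← h₁]; group

theorem mul_pow_mem_zpowersMulZpowers (hab : (a * b) ^ 2 = 1) (h₁ : b⁻¹ * a = a ^ i * b ^ j₁)
    (h₂ : b * a⁻¹ = a ^ (-i) * b ^ j₂) (n : ℕ) :
    b * a ^ n ∈ zpowersMulZpowers a b ∧ b⁻¹ * a ^ n ∈ zpowersMulZpowers a b := by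
  induction n with
  | zero => exact ⟨⟨0, 1, by simp⟩, ⟨0, -1, by simp⟩⟩
  | succ n ih =>
    obtain ⟨t, ht⟩ : ∃ t : ℤ, b ^ t = (a ^ n)⁻¹ * b ^ (j₁ - 1) * a ^ n :=
      Subgroup.mem_zpowers_iff.mp (inv_pow_mul_mul_pow_mem (Subgroup.zpow_mem_zpowers b _)
        (Subgroup.zpow_mem_zpowers b _) (inv_mul_zpow_sub_one_mul hab h₁ h₂)
        (inv_mul_zpow_add_one_mul h₁ h₂) n).1
    constructor
    · have h : b * a ^ (n + 1) = a ^ (-1 : ℤ) * (b⁻¹ * a ^ n) := by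
        rw [pow_succ', ← mul_assoc, mul_eq_inv_mul_inv_of_mul_sq_eq_one hab]; group
      exact h ▸ zpowersMulZpowers.zpow_mul_mem ih.2 _
    · have h : b⁻¹ * a ^ (n + 1) = a ^ i * (b * a ^ n) * b ^ t := by
        calc b⁻¹ * a ^ (n + 1) = b⁻¹ * a * a ^ n := by rw [pow_succ', mul_assoc]
          _ = a ^ i * b * (a ^ n * ((a ^ n)⁻¹ * b ^ (j₁ - 1) * a ^ n)) := by rw [h₁]; group
          _ = a ^ i * (b * a ^ n) * b ^ t := by rw [← ht]; group
      exact h ▸ zpowersMulZpowers.mul_zpow_mem (zpowersMulZpowers.zpow_mul_mem ih.1 _) _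

theorem mul_zpow_mem_zpowersMulZpowers (hab : (a * b) ^ 2 = 1) (h₁ : b⁻¹ * a = a ^ i * b ^ j₁)
    (h₂ : b * a⁻¹ = a ^ (-i) * b ^ j₂) (s : ℤ) :
    b * a ^ s ∈ zpowersMulZpowers a b ∧ b⁻¹ * a ^ s ∈ zpowersMulZpowers a b := by
  obtain ⟨n, rfl | rfl⟩ := s.eq_nat_or_neg
  · simpa using mul_pow_mem_zpowersMulZpowers hab h₁ h₂ n
  · have hab' : (a⁻¹ * b⁻¹) ^ 2 = 1 := by
      calc (a⁻¹ * b⁻¹) ^ 2 = a⁻¹ * ((a * b) ^ 2)⁻¹ * a := by simp only [sq]; group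
        _ = 1 := by rw [hab]; group
    have h₁' : b⁻¹⁻¹ * a⁻¹ = a⁻¹ ^ i * b⁻¹ ^ (-j₂) := by simpa using h₂
    have h₂' : b⁻¹ * a⁻¹⁻¹ = a⁻¹ ^ (-i) * b⁻¹ ^ (-j₁) := by simpa using h₁
    have := mul_pow_mem_zpowersMulZpowers hab' h₁' h₂' n
    rw [zpowersMulZpowers_inv, inv_inv, ← zpow_natCast, inv_zpow'] at this
    exact this.symm

end

theorem presented_group_tight_general {G : Type*} [Group G] (a b : G) (i j₁ j₂ : ℤ)
    (hgen : Subgroup.closure ({a, b} : Set G) = ⊤)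
    (hab : (a * b) ^ 2 = 1)
    (h₁ : b⁻¹ * a = a ^ i * b ^ j₁)
    (h₂ : b * a⁻¹ = a ^ (-i) * b ^ j₂) :
    ∀ g : G, ∃ s t : ℤ, g = a ^ s * b ^ t :=
  mem_zpowersMulZpowers_of_closure_eq_top hgen
    (fun s => (mul_zpow_mem_zpowersMulZpowers hab h₁ h₂ s).1)
    (fun s => (mul_zpow_mem_zpowersMulZpowers hab h₁ h₂ s).2)

/-- A group generated by `a, b` with `a^p = b^q = (ab)^2 = 1`,
`b⁻¹ a = a^i b^(j₁)` and `b a⁻¹ = a^(-i) b^(j₂)` is tight. -/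
theorem presented_group_tight {G : Type*} [Group G] (a b : G) (p q : ℕ)
    (hp : 1 ≤ p) (hq : 1 ≤ q) (i j₁ j₂ : ℤ)
    (hgen : Subgroup.closure ({a, b} : Set G) = ⊤)
    (ha : a ^ p = 1) (hb : b ^ q = 1) (hab : (a * b) ^ 2 = 1)
    (h₁ : b⁻¹ * a = a ^ i * b ^ j₁)
    (h₂ : b * a⁻¹ = a ^ (-i) * b ^ j₂) :
    ∀ g : G, ∃ s t : ℤ, g = a ^ s * b ^ t :=
  presented_group_tight_general a b i j₁ j₂ hgen hab h₁ h₂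
end

section
/- Let β ≥ 5 be an integer and let ε ∈ {1, −1}. Let G = Λ(8, 2^β; 3, 1 + ε·2^(β−2), −3, −1 + ε·2^(β−2)) and let a, b be the images in G of the two generators. Then (G, a, b) is a tight chiral rotation pair of type (8, 2^β); that is: G is finite with orderOf a = 8, orderOf b = 2^β, (a*b)^2 = 1, Subgroup.zpowers a ⊓ Subgroup.zpowers b = ⊥, every element of G equals a^i * b^j for some integers i, j, and no group automorphism of G sends a to a⁻¹ and b to b⁻¹. -/
/-- The relators of the group `Λ(p, q; i₁, j₁, i₂, j₂)`:
`x^p`, `y^q`, `(xy)²`, `y⁻¹ x (x^(i₁) y^(j₁))⁻¹`, `y x⁻¹ (x^(i₂) y^(j₂))⁻¹`. -/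
def lambdaRels (p q : ℕ) (i₁ j₁ i₂ j₂ : ℤ) : Set (FreeGroup (Fin 2)) :=
  {(FreeGroup.of 0) ^ p,
   (FreeGroup.of 1) ^ q,
   (FreeGroup.of 0 * FreeGroup.of 1) ^ 2,
   (FreeGroup.of 1)⁻¹ * FreeGroup.of 0 *
     ((FreeGroup.of 0) ^ i₁ * (FreeGroup.of 1) ^ j₁)⁻¹,
   FreeGroup.of 1 * (FreeGroup.of 0)⁻¹ *
     ((FreeGroup.of 0) ^ i₂ * (FreeGroup.of 1) ^ j₂)⁻¹}

/-- The presented group `Λ(p, q; i₁, j₁, i₂, j₂)`. -/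
abbrev Lambda (p q : ℕ) (i₁ j₁ i₂ j₂ : ℤ) : Type :=
  PresentedGroup (lambdaRels p q i₁ j₁ i₂ j₂)

/-!
The relations give `a⁻² b a² = b ^ j₁` and `a² b a⁻² = b ^ (-j₂)`, so `a²` normalises `⟨b⟩`;
with `(ab)² = 1` this moves every power of `b` to the right of every power of `a`, hence every
element is `a ^ i * b ^ j` and the group is finite. The lower bounds `orderOf a = 8`,
`orderOf b = 2 ^ β` and `⟨a⟩ ∩ ⟨b⟩ = 1` come from the action on the `2 ^ β` right cosets of `⟨a⟩`,
written down explicitly on `ZMod (2 ^ β)`. An automorphism inverting `a` and `b` would carry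
`b⁻¹ a = a³ b ^ j₁` to `b a⁻¹ = a⁻³ b ^ (-j₁)`, and the relation `b a⁻¹ = a⁻³ b ^ j₂` then gives
`b ^ (j₁ + j₂) = b ^ (ε 2 ^ (β - 1)) = 1`, against `orderOf b = 2 ^ β`.
-/

open Subgroup PresentedGroup
open scoped Pointwise

section Generation

variable {G : Type*} [Group G] {a b : G}

theorem mem_normalizer_zpowers_of_conj {g : G} {m n : ℤ} (h₁ : g * b * g⁻¹ = b ^ m)
    (h₂ : g⁻¹ * b * g = b ^ n) : g ∈ normalizer (zpowers b : Set G) := by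
  refine mem_set_normalizer_iff.mpr fun h => ?_
  simp only [SetLike.mem_coe, mem_zpowers_iff]
  constructor
  · rintro ⟨k, rfl⟩
    exact ⟨m * k, by rw [zpow_mul, ← h₁, conj_zpow]⟩
  · rintro ⟨k, hk⟩
    refine ⟨n * k, ?_⟩
    have hconj : (g⁻¹ * b * g) ^ k = g⁻¹ * b ^ k * g := by simpa using conj_zpow (a := g⁻¹)
    rw [zpow_mul, ← h₂, hconj, hk]
    group

theorem sq_mem_normalizer_zpowers {j₁ j₂ : ℤ} (hab : (a * b) ^ 2 = 1)
    (h₁ : b⁻¹ * a = a ^ (3 : ℤ) * b ^ j₁) (h₂ : b * a⁻¹ = a ^ (-3 : ℤ) * b ^ j₂) :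
    a ^ 2 ∈ normalizer (zpowers b : Set G) := by
  have hinv : (a * b)⁻¹ = a * b := inv_eq_of_mul_eq_one_right (by rw [← sq, hab])
  refine mem_normalizer_zpowers_of_conj (m := -j₂) (n := j₁) ?_ ?_
  · calc a ^ 2 * b * (a ^ 2)⁻¹ = a * (a * b) * a⁻¹ * a⁻¹ := by rw [sq]; group
      _ = (b * a⁻¹)⁻¹ * (a ^ (3 : ℤ))⁻¹ := by rw [← hinv]; group
      _ = b ^ (-j₂) := by rw [h₂]; group
  · calc (a ^ 2)⁻¹ * b * a ^ 2 = (a ^ (3 : ℤ))⁻¹ * (a * b) * a ^ 2 := by rw [sq]; group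
      _ = (a ^ (3 : ℤ))⁻¹ * (b⁻¹ * a) := by rw [← hinv]; group
      _ = b ^ j₁ := by rw [h₁]; group

theorem exists_zpow_mul_zpow_two_mul_eq (hnorm : a ^ 2 ∈ normalizer (zpowers b : Set G))
    (j k : ℤ) : ∃ m : ℤ, b ^ j * a ^ (2 * k) = a ^ (2 * k) * b ^ m := by
  have hk : (a ^ 2) ^ (-k) ∈ normalizer (zpowers b : Set G) := zpow_mem hnorm _
  obtain ⟨m, hm⟩ :=
    mem_zpowers_iff.mp ((mem_set_normalizer_iff.mp hk (b ^ j)).mp (zpow_mem_zpowers b j))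
  refine ⟨m, ?_⟩
  rw [hm, zpow_mul, zpow_ofNat]
  group

theorem exists_mul_zpow_mul_zpow_eq (hab : (a * b) ^ 2 = 1)
    (hnorm : a ^ 2 ∈ normalizer (zpowers b : Set G)) (i j : ℤ) :
    ∃ i' j' : ℤ, b * (a ^ i * b ^ j) = a ^ i' * b ^ j' := by
  obtain ⟨k, rfl | rfl⟩ := Int.even_or_odd' i
  · obtain ⟨m, hm⟩ := exists_zpow_mul_zpow_two_mul_eq hnorm 1 k
    refine ⟨2 * k, m + j, ?_⟩
    calc b * (a ^ (2 * k) * b ^ j) = (b ^ (1 : ℤ) * a ^ (2 * k)) * b ^ j := by group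
      _ = a ^ (2 * k) * b ^ (m + j) := by rw [hm]; group
  · obtain ⟨m, hm⟩ := exists_zpow_mul_zpow_two_mul_eq hnorm (-1) k
    refine ⟨2 * k - 1, m + j, ?_⟩
    have hinv : (a * b)⁻¹ = a * b := inv_eq_of_mul_eq_one_right (by rw [← sq, hab])
    calc b * (a ^ (2 * k + 1) * b ^ j) = a⁻¹ * (a * b) * a * a ^ (2 * k) * b ^ j := by group
      _ = a⁻¹ * (b ^ (-1 : ℤ) * a ^ (2 * k)) * b ^ j := by rw [← hinv]; group
      _ = a ^ (2 * k - 1) * b ^ (m + j) := by rw [hm]; group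

theorem exists_inv_mul_zpow_mul_zpow_eq (hab : (a * b) ^ 2 = 1)
    (hnorm : a ^ 2 ∈ normalizer (zpowers b : Set G)) (i j : ℤ) :
    ∃ i' j' : ℤ, b⁻¹ * (a ^ i * b ^ j) = a ^ i' * b ^ j' := by
  obtain ⟨k, rfl | rfl⟩ := Int.even_or_odd' i
  · obtain ⟨m, hm⟩ := exists_zpow_mul_zpow_two_mul_eq hnorm (-1) k
    refine ⟨2 * k, m + j, ?_⟩
    calc b⁻¹ * (a ^ (2 * k) * b ^ j) = (b ^ (-1 : ℤ) * a ^ (2 * k)) * b ^ j := by group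
      _ = a ^ (2 * k) * b ^ (m + j) := by rw [hm]; group
  · obtain ⟨m, hm⟩ := exists_zpow_mul_zpow_two_mul_eq hnorm 1 (k + 1)
    refine ⟨2 * k + 3, m + j, ?_⟩
    have hinv : (a * b)⁻¹ = a * b := inv_eq_of_mul_eq_one_right (by rw [← sq, hab])
    calc b⁻¹ * (a ^ (2 * k + 1) * b ^ j) = (a * b)⁻¹ * a ^ (2 * (k + 1)) * b ^ j := by group
      _ = a * (b ^ (1 : ℤ) * a ^ (2 * (k + 1))) * b ^ j := by rw [hinv]; group
      _ = a ^ (2 * k + 3) * b ^ (m + j) := by rw [hm]; group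

theorem exists_eq_zpow_mul_zpow (hgen : closure {a, b} = ⊤) (hab : (a * b) ^ 2 = 1)
    (hnorm : a ^ 2 ∈ normalizer (zpowers b : Set G)) (g : G) :
    ∃ i j : ℤ, g = a ^ i * b ^ j := by
  induction (hgen ▸ mem_top g : g ∈ closure {a, b}) using closure_induction_left with
  | one => exact ⟨0, 0, by simp⟩
  | mul_left s hs _ _ ih =>
    obtain ⟨i, j, rfl⟩ := ih
    rcases hs with rfl | rfl
    · exact ⟨i + 1, j, by group⟩
    · obtain ⟨i', j', h⟩ := exists_mul_zpow_mul_zpow_eq hab hnorm i j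
      exact ⟨i', j', h⟩
  | inv_mul_cancel s hs _ _ ih =>
    obtain ⟨i, j, rfl⟩ := ih
    rcases hs with rfl | rfl
    · exact ⟨i - 1, j, by group⟩
    · obtain ⟨i', j', h⟩ := exists_inv_mul_zpow_mul_zpow_eq hab hnorm i j
      exact ⟨i', j', h⟩

theorem finite_of_forall_eq_zpow_mul_zpow (ha : IsOfFinOrder a) (hb : IsOfFinOrder b)
    (h : ∀ g : G, ∃ i j : ℤ, g = a ^ i * b ^ j) : Finite G := by
  refine Set.finite_univ_iff.mp ((ha.finite_zpowers.mul hb.finite_zpowers).subset fun g _ => ?_)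
  obtain ⟨i, j, rfl⟩ := h g
  exact Set.mul_mem_mul (zpow_mem_zpowers a i) (zpow_mem_zpowers b j)

theorem zpowers_inf_zpowers_eq_bot_of_perm {X : Type*} (φ : G →* Equiv.Perm X) (x : X)
    (ha : φ a x = x) (hb : ∀ j : ℤ, (φ b ^ j) x = x → b ^ j = 1) :
    zpowers a ⊓ zpowers b = ⊥ := by
  refine eq_bot_iff.mpr fun g hg => ?_
  obtain ⟨⟨i, rfl⟩, ⟨j, hj⟩⟩ := mem_inf.mp hg
  simp only at hj ⊢
  rw [mem_bot, ← hj]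
  refine hb j ?_
  rw [← map_zpow, hj, map_zpow]
  exact Equiv.Perm.zpow_apply_eq_self_of_apply_eq_self ha i

theorem zpow_add_eq_one_of_map_eq_inv {i j₁ j₂ : ℤ} (h₁ : b⁻¹ * a = a ^ i * b ^ j₁)
    (h₂ : b * a⁻¹ = a ^ (-i) * b ^ j₂) (φ : G →* G) (ha : φ a = a⁻¹) (hb : φ b = b⁻¹) :
    b ^ (j₁ + j₂) = 1 := by
  have h₁' := congrArg φ h₁
  simp only [map_mul, map_inv, map_zpow, ha, hb, inv_inv, inv_zpow, ← zpow_neg] at h₁'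
  have h : b ^ (-j₁) = b ^ j₂ := mul_left_cancel (h₁'.symm.trans h₂)
  rw [zpow_add, ← h, ← zpow_add, add_neg_cancel, zpow_zero]

end Generation

namespace Lambda

variable {p q : ℕ} {i₁ j₁ i₂ j₂ : ℤ}

theorem of_zero_pow : (of 0 : Lambda p q i₁ j₁ i₂ j₂) ^ p = 1 := by
  have h := one_of_mem (rels := lambdaRels p q i₁ j₁ i₂ j₂) (x := FreeGroup.of 0 ^ p)
    (by simp [lambdaRels])
  rwa [map_pow] at h

theorem of_one_pow : (of 1 : Lambda p q i₁ j₁ i₂ j₂) ^ q = 1 := by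
  have h := one_of_mem (rels := lambdaRels p q i₁ j₁ i₂ j₂) (x := FreeGroup.of 1 ^ q)
    (by simp [lambdaRels])
  rwa [map_pow] at h

theorem of_zero_mul_of_one_sq : (of 0 * of 1 : Lambda p q i₁ j₁ i₂ j₂) ^ 2 = 1 := by
  have h := one_of_mem (rels := lambdaRels p q i₁ j₁ i₂ j₂)
    (x := (FreeGroup.of 0 * FreeGroup.of 1) ^ 2) (by simp [lambdaRels])
  rwa [map_pow, map_mul] at h

theorem inv_of_one_mul_of_zero :
    (of 1 : Lambda p q i₁ j₁ i₂ j₂)⁻¹ * of 0 = of 0 ^ i₁ * of 1 ^ j₁ := by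
  have h := one_of_mem (rels := lambdaRels p q i₁ j₁ i₂ j₂)
    (x := (FreeGroup.of 1)⁻¹ * FreeGroup.of 0 * (FreeGroup.of 0 ^ i₁ * FreeGroup.of 1 ^ j₁)⁻¹)
    (by simp [lambdaRels])
  simp only [map_mul, map_inv, map_zpow] at h
  exact mul_inv_eq_one.mp h

theorem of_one_mul_inv_of_zero :
    (of 1 : Lambda p q i₁ j₁ i₂ j₂) * (of 0)⁻¹ = of 0 ^ i₂ * of 1 ^ j₂ := by
  have h := one_of_mem (rels := lambdaRels p q i₁ j₁ i₂ j₂)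
    (x := FreeGroup.of 1 * (FreeGroup.of 0)⁻¹ * (FreeGroup.of 0 ^ i₂ * FreeGroup.of 1 ^ j₂)⁻¹)
    (by simp [lambdaRels])
  simp only [map_mul, map_inv, map_zpow] at h
  exact mul_inv_eq_one.mp h

theorem closure_of_zero_of_one :
    closure {of 0, of 1} = (⊤ : Subgroup (Lambda p q i₁ j₁ i₂ j₂)) := by
  rw [← closure_range_of]
  congr
  ext x
  simp [Fin.exists_fin_two, eq_comm]

section lift

variable {H : Type*} [Group H]

def lift (x y : H) (hp : x ^ p = 1) (hq : y ^ q = 1) (hxy : (x * y) ^ 2 = 1)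
    (h₁ : y⁻¹ * x = x ^ i₁ * y ^ j₁) (h₂ : y * x⁻¹ = x ^ i₂ * y ^ j₂) :
    Lambda p q i₁ j₁ i₂ j₂ →* H :=
  toGroup (f := ![x, y]) <| by
    simp only [lambdaRels, Set.mem_insert_iff, Set.mem_singleton_iff]
    rintro r (rfl | rfl | rfl | rfl | rfl) <;> simp [*]

@[simp]
theorem lift_of_zero {x y : H} (hp : x ^ p = 1) (hq : y ^ q = 1) (hxy : (x * y) ^ 2 = 1)
    (h₁ : y⁻¹ * x = x ^ i₁ * y ^ j₁) (h₂ : y * x⁻¹ = x ^ i₂ * y ^ j₂) :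
    lift x y hp hq hxy h₁ h₂ (of 0) = x :=
  toGroup.of _

@[simp]
theorem lift_of_one {x y : H} (hp : x ^ p = 1) (hq : y ^ q = 1) (hxy : (x * y) ^ 2 = 1)
    (h₁ : y⁻¹ * x = x ^ i₁ * y ^ j₁) (h₂ : y * x⁻¹ = x ^ i₂ * y ^ j₂) :
    lift x y hp hq hxy h₁ h₂ (of 1) = y :=
  toGroup.of _

end lift

theorem exists_eq_of_zero_zpow_mul_of_one_zpow (g : Lambda p q 3 j₁ (-3) j₂) :
    ∃ i j : ℤ, g = of 0 ^ i * of 1 ^ j :=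
  exists_eq_zpow_mul_zpow closure_of_zero_of_one of_zero_mul_of_one_sq
    (sq_mem_normalizer_zpowers of_zero_mul_of_one_sq inv_of_one_mul_of_zero
      of_one_mul_inv_of_zero) g

theorem finite (hp : 0 < p) (hq : 0 < q) : Finite (Lambda p q 3 j₁ (-3) j₂) :=
  finite_of_forall_eq_zpow_mul_zpow (isOfFinOrder_iff_pow_eq_one.mpr ⟨p, hp, of_zero_pow⟩)
    (isOfFinOrder_iff_pow_eq_one.mpr ⟨q, hq, of_one_pow⟩) exists_eq_of_zero_zpow_mul_of_one_zpow

end Lambda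

def Equiv.Perm.ofIterateEqId {α : Type*} (f : α → α) (n : ℕ) (h : f^[n + 1] = id) :
    Equiv.Perm α where
  toFun := f
  invFun := f^[n]
  left_inv x := by rw [← Function.iterate_succ_apply, h, id]
  right_inv x := by rw [← Function.iterate_succ_apply' f n x, h, id]

namespace EvenAtomic

variable (β : ℕ) (ε : ℤ)

abbrev Λ : Type := Lambda 8 (2 ^ β) 3 (1 + ε * 2 ^ (β - 2)) (-3) (-1 + ε * 2 ^ (β - 2))

def coeff : ZMod (2 ^ β) := ε * 2 ^ (β - 3)

/- `rotA` and `permB` below are the permutations by which `a` and `b` act on the right cosets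
`⟨a⟩ b ^ j` of `⟨a⟩`, via `x ↦ x g⁻¹`. -/
def rotA (j : ZMod (2 ^ β)) : ZMod (2 ^ β) := -j + coeff β ε * j * (j + 1)

theorem two_pow_eq_zero : (2 : ZMod (2 ^ β)) ^ β = 0 := by
  exact_mod_cast ZMod.natCast_self (2 ^ β)

theorem two_pow_pred_ne_zero (hβ : 1 ≤ β) : (2 : ZMod (2 ^ β)) ^ (β - 1) ≠ 0 := by
  have h : ((2 ^ (β - 1) : ℕ) : ZMod (2 ^ β)) ≠ 0 := by
    rw [Ne, ZMod.natCast_eq_zero_iff, Nat.pow_dvd_pow_iff_le_right (by norm_num)]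
    omega
  exact_mod_cast h

variable {β}

/- Every identity between the maps below holds modulo `2 * coeff ^ 2` and
`coeff ^ 2 * (j * (j + 1))`, which vanish in `ZMod (2 ^ β)` once `β ≥ 5`. -/
theorem two_mul_coeff_sq (hβ : 5 ≤ β) : 2 * coeff β ε ^ 2 = 0 := by
  have h : (β - 3) * 2 + 1 = β + (β - 5) := by omega
  rw [coeff, mul_pow, ← pow_mul, mul_left_comm, ← pow_succ', h, pow_add, two_pow_eq_zero,
    zero_mul, mul_zero]

theorem coeff_sq_mul_mul_add_one (hβ : 5 ≤ β) (j : ZMod (2 ^ β)) :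
    coeff β ε ^ 2 * (j * (j + 1)) = 0 := by
  obtain ⟨n, rfl⟩ := ZMod.intCast_surjective j
  obtain ⟨m, hm⟩ := Int.even_mul_succ_self n
  have hm' : ((n : ZMod (2 ^ β))) * (n + 1) = 2 * m := by
    simpa [two_mul] using congrArg (Int.cast : ℤ → ZMod (2 ^ β)) hm
  rw [hm', mul_left_comm, ← mul_assoc, two_mul_coeff_sq ε hβ, zero_mul]

theorem eight_mul_coeff (hβ : 3 ≤ β) : 8 * coeff β ε = 0 := by
  have h : 3 + (β - 3) = β := by omega
  rw [coeff, mul_left_comm, show (8 : ZMod (2 ^ β)) = 2 ^ 3 by norm_num, ← pow_add, h,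
    two_pow_eq_zero, mul_zero]

theorem four_mul_coeff_ne_zero (hβ : 3 ≤ β) (hε : ε = 1 ∨ ε = -1) : 4 * coeff β ε ≠ 0 := by
  have h : 2 + (β - 3) = β - 1 := by omega
  rw [coeff, mul_left_comm, show (4 : ZMod (2 ^ β)) = 2 ^ 2 by norm_num, ← pow_add, h]
  rcases hε with rfl | rfl <;> simpa using two_pow_pred_ne_zero β (by omega)

theorem intCast_mul_two_pow_sub_two (hβ : 3 ≤ β) :
    (ε : ZMod (2 ^ β)) * 2 ^ (β - 2) = 2 * coeff β ε := by
  rw [coeff, show β - 2 = β - 3 + 1 by omega, pow_succ]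
  ring

theorem rotA_rotA (hβ : 5 ≤ β) (j : ZMod (2 ^ β)) :
    rotA β ε (rotA β ε j) = (1 - 2 * coeff β ε) * j := by
  unfold rotA
  linear_combination (1 - 2 * j + coeff β ε * j + coeff β ε * j ^ 2) *
    coeff_sq_mul_mul_add_one ε hβ j

theorem rotA_iterate_two (hβ : 5 ≤ β) : (rotA β ε)^[2] = ((1 - 2 * coeff β ε) * ·) :=
  funext (rotA_rotA ε hβ)

theorem rotA_iterate_eight (hβ : 5 ≤ β) : (rotA β ε)^[8] = id := by
  rw [show 8 = 2 * 4 from rfl, Function.iterate_mul, rotA_iterate_two ε hβ, mul_left_iterate]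
  funext j
  rw [id_eq]
  linear_combination (-1 + 3 * coeff β ε - 4 * coeff β ε ^ 2 + 2 * coeff β ε ^ 3) * j *
    eight_mul_coeff ε (by omega : 3 ≤ β)

variable (β) in
def permA (hβ : 5 ≤ β) : Equiv.Perm (ZMod (2 ^ β)) :=
  Equiv.Perm.ofIterateEqId (rotA β ε) 7 (rotA_iterate_eight ε hβ)

variable (β) in
def permB : Equiv.Perm (ZMod (2 ^ β)) := Equiv.addRight (-1)

theorem coe_permA (hβ : 5 ≤ β) : ⇑(permA β ε hβ) = rotA β ε := rfl

theorem permB_apply (j : ZMod (2 ^ β)) : permB β j = j - 1 := (sub_eq_add_neg j 1).symm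

theorem inv_permB_apply (j : ZMod (2 ^ β)) : (permB β)⁻¹ j = j + 1 := by
  rw [Equiv.Perm.inv_eq_iff_eq, permB_apply, add_sub_cancel_right]

theorem permB_zpow_apply (k : ℤ) (j : ZMod (2 ^ β)) : (permB β ^ k) j = j - k := by
  induction k using Int.induction_on generalizing j with
  | zero => simp
  | succ k ih =>
    rw [zpow_add_one, Equiv.Perm.mul_apply, ih, permB_apply]
    push_cast
    ring
  | pred k ih =>
    rw [zpow_sub_one, Equiv.Perm.mul_apply, ih, inv_permB_apply]
    push_cast
    ring

theorem permA_pow_eight (hβ : 5 ≤ β) : permA β ε hβ ^ 8 = 1 :=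
  Equiv.ext (congrFun (rotA_iterate_eight ε hβ))

theorem permB_pow_two_pow : permB β ^ 2 ^ β = 1 := by
  ext j
  rw [← zpow_natCast, permB_zpow_apply]
  simp [two_pow_eq_zero]

theorem permA_mul_permB_sq (hβ : 5 ≤ β) : (permA β ε hβ * permB β) ^ 2 = 1 := by
  ext j
  simp only [sq, Equiv.Perm.mul_apply, coe_permA, permB_apply, Equiv.Perm.one_apply]
  unfold rotA
  set c := coeff β ε
  linear_combination (-3 * j - 2 * c * j) * two_mul_coeff_sq ε hβ +
    (5 + 4 * c - 2 * j - 3 * c * j + c * j ^ 2) * coeff_sq_mul_mul_add_one ε hβ j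

theorem permA_pow_three_apply (hβ : 5 ≤ β) (j : ZMod (2 ^ β)) :
    (permA β ε hβ ^ (3 : ℤ)) j = (1 - 2 * coeff β ε) * rotA β ε j := by
  rw [zpow_ofNat, Equiv.Perm.coe_pow, coe_permA, Function.iterate_succ_apply',
    Function.iterate_succ_apply', Function.iterate_one, rotA_rotA ε hβ]

theorem inv_permB_mul_permA (hβ : 5 ≤ β) :
    (permB β)⁻¹ * permA β ε hβ = permA β ε hβ ^ (3 : ℤ) * permB β ^ (1 + ε * 2 ^ (β - 2)) := by
  ext j
  rw [Equiv.Perm.mul_apply, Equiv.Perm.mul_apply, inv_permB_apply, permA_pow_three_apply,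
    permB_zpow_apply, coe_permA]
  push_cast
  rw [intCast_mul_two_pow_sub_two ε (by omega : 3 ≤ β)]
  unfold rotA
  set c := coeff β ε
  linear_combination (1 + 4 * c ^ 2 - 4 * c * j) * two_mul_coeff_sq ε hβ +
    2 * coeff_sq_mul_mul_add_one ε hβ j

theorem permB_mul_inv_permA (hβ : 5 ≤ β) :
    permB β * (permA β ε hβ)⁻¹ = permA β ε hβ ^ (-3 : ℤ) * permB β ^ (-1 + ε * 2 ^ (β - 2)) := by
  rw [zpow_neg, eq_inv_mul_iff_mul_eq, ← mul_assoc, mul_inv_eq_iff_eq_mul]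
  ext j
  rw [Equiv.Perm.mul_apply, Equiv.Perm.mul_apply, permA_pow_three_apply, permB_zpow_apply,
    permB_apply, coe_permA]
  push_cast
  rw [intCast_mul_two_pow_sub_two ε (by omega : 3 ≤ β)]
  unfold rotA
  set c := coeff β ε
  linear_combination 2 * j * two_mul_coeff_sq ε hβ - 2 * coeff_sq_mul_mul_add_one ε hβ j

theorem rotA_zero : rotA β ε 0 = 0 := by simp [rotA]

theorem permA_pow_four_ne_one (hβ : 5 ≤ β) (hε : ε = 1 ∨ ε = -1) : permA β ε hβ ^ 4 ≠ 1 := by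
  intro h
  apply four_mul_coeff_ne_zero ε (by omega : 3 ≤ β) hε
  have h1 : (rotA β ε)^[4] 1 = 1 := congrFun (congrArg DFunLike.coe h) 1
  rw [show 4 = 2 * 2 from rfl, Function.iterate_mul, rotA_iterate_two ε hβ,
    mul_left_iterate_apply_one] at h1
  linear_combination -h1 + 2 * two_mul_coeff_sq ε hβ

theorem permB_pow_two_pow_pred_ne_one (hβ : 1 ≤ β) : permB β ^ 2 ^ (β - 1) ≠ 1 := by
  intro h
  have h0 : (permB β ^ 2 ^ (β - 1)) 0 = 0 := by rw [h, Equiv.Perm.one_apply]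
  rw [← zpow_natCast, permB_zpow_apply] at h0
  push_cast at h0
  exact two_pow_pred_ne_zero β hβ (neg_eq_zero.mp ((zero_sub _).symm.trans h0))

variable (β) in
def toPerm (hβ : 5 ≤ β) : Λ β ε →* Equiv.Perm (ZMod (2 ^ β)) :=
  Lambda.lift (permA β ε hβ) (permB β) (permA_pow_eight ε hβ) permB_pow_two_pow
    (permA_mul_permB_sq ε hβ) (inv_permB_mul_permA ε hβ) (permB_mul_inv_permA ε hβ)

theorem toPerm_of_zero (hβ : 5 ≤ β) : toPerm β ε hβ (of 0) = permA β ε hβ :=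
  Lambda.lift_of_zero ..

theorem toPerm_of_one (hβ : 5 ≤ β) : toPerm β ε hβ (of 1) = permB β :=
  Lambda.lift_of_one ..

theorem orderOf_of_zero (hβ : 5 ≤ β) (hε : ε = 1 ∨ ε = -1) : orderOf (of 0 : Λ β ε) = 8 := by
  refine orderOf_eq_prime_pow (p := 2) (n := 2) (fun h => permA_pow_four_ne_one ε hβ hε ?_)
    Lambda.of_zero_pow
  norm_num at h
  rw [← toPerm_of_zero ε hβ, ← map_pow, h, map_one]

theorem of_one_pow_two_pow_pred_ne_one (hβ : 5 ≤ β) : (of 1 : Λ β ε) ^ 2 ^ (β - 1) ≠ 1 :=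
  fun h => permB_pow_two_pow_pred_ne_one (by omega : 1 ≤ β)
    (by rw [← toPerm_of_one ε hβ, ← map_pow, h, map_one])

theorem orderOf_of_one (hβ : 5 ≤ β) : orderOf (of 1 : Λ β ε) = 2 ^ β := by
  have hβ' : β - 1 + 1 = β := by omega
  simpa [hβ'] using orderOf_eq_prime_pow (of_one_pow_two_pow_pred_ne_one ε hβ)
    (by rw [hβ']; exact Lambda.of_one_pow)

theorem zpowers_of_zero_inf_zpowers_of_one (hβ : 5 ≤ β) :
    zpowers (of 0 : Λ β ε) ⊓ zpowers (of 1) = ⊥ := by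
  refine zpowers_inf_zpowers_eq_bot_of_perm (toPerm β ε hβ) 0
    (by rw [toPerm_of_zero, coe_permA, rotA_zero]) fun j hj => ?_
  rw [toPerm_of_one, permB_zpow_apply, zero_sub, neg_eq_zero,
    ZMod.intCast_zmod_eq_zero_iff_dvd, ← orderOf_of_one ε hβ] at hj
  exact orderOf_dvd_iff_zpow_eq_one.mp hj

theorem not_exists_mulEquiv_inv (hβ : 5 ≤ β) (hε : ε = 1 ∨ ε = -1) :
    ¬ ∃ φ : Λ β ε ≃* Λ β ε, φ (of 0) = (of 0)⁻¹ ∧ φ (of 1) = (of 1)⁻¹ := by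
  rintro ⟨φ, hφa, hφb⟩
  have h := zpow_add_eq_one_of_map_eq_inv Lambda.inv_of_one_mul_of_zero
    Lambda.of_one_mul_inv_of_zero φ.toMonoidHom hφa hφb
  rw [show 1 + ε * 2 ^ (β - 2) + (-1 + ε * 2 ^ (β - 2)) = ε * 2 ^ (β - 1) by
    rw [show β - 1 = β - 2 + 1 by omega, pow_succ]; ring] at h
  refine of_one_pow_two_pow_pred_ne_one ε hβ ?_
  rcases hε with rfl | rfl <;> simp at h <;> exact_mod_cast h

end EvenAtomic

/-- `Λ(8, 2^β; 3, 1 + ε·2^(β-2), -3, -1 + ε·2^(β-2))` (for `β ≥ 5`, `ε = ±1`) is the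
automorphism group of a tight chiral polyhedron of type `{8, 2^β}`. -/
theorem even_atomics_tight_chiral (β : ℕ) (hβ : 5 ≤ β) (ε : ℤ) (hε : ε = 1 ∨ ε = -1) :
    let G := Lambda 8 (2 ^ β) 3 (1 + ε * 2 ^ (β - 2)) (-3) (-1 + ε * 2 ^ (β - 2))
    let a : G := PresentedGroup.of 0
    let b : G := PresentedGroup.of 1
    Finite G ∧ orderOf a = 8 ∧ orderOf b = 2 ^ β ∧ (a * b) ^ 2 = 1 ∧
      Subgroup.zpowers a ⊓ Subgroup.zpowers b = ⊥ ∧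
      (∀ g : G, ∃ i j : ℤ, g = a ^ i * b ^ j) ∧
      ¬ ∃ φ : G ≃* G, φ a = a⁻¹ ∧ φ b = b⁻¹ :=
  ⟨Lambda.finite (by norm_num) (by positivity), EvenAtomic.orderOf_of_zero ε hβ hε,
    EvenAtomic.orderOf_of_one ε hβ, Lambda.of_zero_mul_of_one_sq,
    EvenAtomic.zpowers_of_zero_inf_zpowers_of_one ε hβ,
    Lambda.exists_eq_of_zero_zpow_mul_of_one_zpow, EvenAtomic.not_exists_mulEquiv_inv ε hβ hε⟩
end
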